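/- x̄ ∈ ℝⁿ is a global minimizer of SCNO if and only if there exists ȳ ∈ [0,1]ⁿ such that (x̄, ȳ) is a global minimizer of the relaxed problem: min f(x) s.t. ∑ᵢ yᵢ ≥ n − s, yᵢ ∈ [0,1], xᵢyᵢ = 0 for all i. -/

import Mathlib

/-!
A vector `x` is feasible for the relaxation (for some `y`) exactly when it is `s`-sparse: the
complementarity `x i * y i = 0` forces `y` to vanish on the support of `x`, so
`∑ y ≤ #{i | x i = 0}`, and conversely the indicator of the zero set of `x` is an admissible `y`.
The two problems thus have the same feasible `x`'s and the same objective.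
-/

open Finset

variable {ι : Type*} [Fintype ι]

lemma card_zeros_add_ncard_support (x : ι → ℝ) :
    #{i | x i = 0} + Set.ncard {i | x i ≠ 0} = Fintype.card ι := by
  rw [Set.ncard_eq_toFinset_card', Set.toFinset_ofPred]
  exact card_filter_add_card_filter_not _

lemma sum_le_card_zeros {x y : ι → ℝ} (hy : ∀ i, y i ≤ 1) (hxy : ∀ i, x i * y i = 0) :
    ∑ i, y i ≤ #{i | x i = 0} := by
  calc ∑ i, y i ≤ ∑ i, if x i = 0 then (1 : ℝ) else 0 := by
        refine sum_le_sum fun i _ => ?_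
        split_ifs with hx
        · exact hy i
        · exact ((mul_eq_zero.mp (hxy i)).resolve_left hx).le
    _ = #{i | x i = 0} := by rw [sum_boole]

lemma exists_relaxation_feasible_iff (s : ℕ) (x : ι → ℝ) :
    (∃ y : ι → ℝ, (∀ i, y i ∈ Set.Icc (0 : ℝ) 1) ∧
      (Fintype.card ι : ℝ) - s ≤ ∑ i, y i ∧ ∀ i, x i * y i = 0) ↔
    Set.ncard {i | x i ≠ 0} ≤ s := by
  have hcard : (#{i | x i = 0} : ℝ) + Set.ncard {i | x i ≠ 0} = Fintype.card ι := by
    exact_mod_cast card_zeros_add_ncard_support x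
  constructor
  · rintro ⟨y, hy, hsum, hxy⟩
    have hsum_le := sum_le_card_zeros (fun i => (hy i).2) hxy
    exact_mod_cast (by linarith : (Set.ncard {i | x i ≠ 0} : ℝ) ≤ s)
  · intro hx
    refine ⟨fun i => if x i = 0 then 1 else 0, fun i => ?_, ?_, fun i => ?_⟩
    · by_cases h : x i = 0 <;> simp [h]
    · have hx_real : (Set.ncard {i | x i ≠ 0} : ℝ) ≤ s := by exact_mod_cast hx
      rw [sum_boole]
      linarith
    · by_cases h : x i = 0 <;> simp [h]

theorem scno_global_min_iff_relaxation_global_min_general (n s : ℕ)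
    (f : (Fin n → ℝ) → ℝ) (xbar : Fin n → ℝ) :
    (Set.ncard {i : Fin n | xbar i ≠ 0} ≤ s ∧
      ∀ x : Fin n → ℝ, Set.ncard {i : Fin n | x i ≠ 0} ≤ s → f xbar ≤ f x) ↔
    (∃ ybar : Fin n → ℝ,
      ((∀ i, ybar i ∈ Set.Icc (0 : ℝ) 1) ∧
        (n : ℝ) - (s : ℝ) ≤ ∑ i, ybar i ∧
        (∀ i, xbar i * ybar i = 0)) ∧
      ∀ x y : Fin n → ℝ,
        (∀ i, y i ∈ Set.Icc (0 : ℝ) 1) →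
        (n : ℝ) - (s : ℝ) ≤ ∑ i, y i →
        (∀ i, x i * y i = 0) →
        f xbar ≤ f x) := by
  have feasible_iff := Fintype.card_fin n ▸ exists_relaxation_feasible_iff (ι := Fin n) s
  constructor
  · rintro ⟨hxbar, hmin⟩
    obtain ⟨ybar, hybar⟩ := (feasible_iff xbar).mpr hxbar
    exact ⟨ybar, hybar, fun x y hy hsum hxy => hmin x ((feasible_iff x).mp ⟨y, hy, hsum, hxy⟩)⟩
  · rintro ⟨ybar, hybar, hmin⟩
    refine ⟨(feasible_iff xbar).mp ⟨ybar, hybar⟩, fun x hx => ?_⟩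
    obtain ⟨y, hy, hsum, hxy⟩ := (feasible_iff x).mpr hx
    exact hmin x y hy hsum hxy

/-- `x̄` globally solves SCNO iff for some `ȳ` the pair `(x̄, ȳ)` globally
solves the relaxed problem. -/
theorem scno_global_min_iff_relaxation_global_min (n s : ℕ) (hs : s < n)
    (f : (Fin n → ℝ) → ℝ) (hf : ContDiff ℝ 2 f) (xbar : Fin n → ℝ) :
    (Set.ncard {i : Fin n | xbar i ≠ 0} ≤ s ∧
      ∀ x : Fin n → ℝ, Set.ncard {i : Fin n | x i ≠ 0} ≤ s → f xbar ≤ f x) ↔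
    (∃ ybar : Fin n → ℝ,
      ((∀ i, ybar i ∈ Set.Icc (0 : ℝ) 1) ∧
        (n : ℝ) - (s : ℝ) ≤ ∑ i, ybar i ∧
        (∀ i, xbar i * ybar i = 0)) ∧
      ∀ x y : Fin n → ℝ,
        (∀ i, y i ∈ Set.Icc (0 : ℝ) 1) →
        (n : ℝ) - (s : ℝ) ≤ ∑ i, y i →
        (∀ i, x i * y i = 0) →
        f xbar ≤ f x) :=
  scno_global_min_iff_relaxation_global_min_general n s f xbar
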